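/- Let Φ be an irreducible reduced crystallographic simply-laced root system with base Δ and highest root θ, and let α ∈ Δ be an abelian simple root (c_α(θ) = 1). Then there exists an element w of the subgroup W_{Δ∖{α}} of the Weyl group generated by the simple reflections in the other simple roots such that w² = 1 and w(α) = θ. (Abelian case of the paper's Lemma on the existence of an involution in the Weyl group of the Levi L_α sending α to δ_α.) -/

import Mathlib

/-!
Every root `δ` with `α`-coefficient `1` is `w α` for an involution `w ∈ W_{Δ∖{α}}`; we argue by
induction on the height of `δ`. Since no root has `α`-coefficient `2`, two distinct such roots
have inner product `0` or `1`. If `⟪δ, α⟫ = 1`, take the reflection in `δ - α`: it is a positive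
root supported on `Δ ∖ {α}`, and the reflection in any such root lies in `W_{Δ∖{α}}` (conjugate
it down by simple reflections). If `⟪δ, α⟫ = 0`, pick a simple `γ` with `⟪δ, γ⟫ = 1`, so `γ ≠ α`.
If `γ ⊥ α`, conjugate the involution for `δ - γ` by `s_γ`; otherwise `⟪γ, α⟫ = -1`, and
`s_γ s_{δ-γ-α}` is a product of commuting reflections sending `α` to `δ`.
-/

open scoped InnerProductSpace

namespace PaperRS

variable {E : Type*} [NormedAddCommGroup E] [InnerProductSpace ℝ E]

/-- A reduced crystallographic simply-laced root system, normalized so that every root has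
squared length `2` (hence `⟪δ, ε⟫` is the Cartan integer `⟨δ, ε^∨⟩`). -/
structure IsRootSystem (Φ : Set E) : Prop where
  finite : Φ.Finite
  nonzero : (0 : E) ∉ Φ
  span_top : Submodule.span ℝ Φ = ⊤
  norm_two : ∀ α ∈ Φ, ⟪α, α⟫_ℝ = 2
  reduced : ∀ α ∈ Φ, ∀ t : ℝ, t • α ∈ Φ → t = 1 ∨ t = -1
  cartan_int : ∀ α ∈ Φ, ∀ β ∈ Φ, ∃ n : ℤ, ⟪α, β⟫_ℝ = (n : ℝ)
  reflect_mem : ∀ α ∈ Φ, ∀ β ∈ Φ, β - ⟪β, α⟫_ℝ • α ∈ Φ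

/-- Irreducibility: `Φ` is nonempty and cannot be split into two mutually orthogonal parts. -/
def IsIrreducible (Φ : Set E) : Prop :=
  Φ.Nonempty ∧ ∀ Φ₁ Φ₂ : Set E, Φ = Φ₁ ∪ Φ₂ →
    (∀ a ∈ Φ₁, ∀ b ∈ Φ₂, ⟪a, b⟫_ℝ = 0) → Φ₁ = ∅ ∨ Φ₂ = ∅

/-- The reflection in (the hyperplane orthogonal to) a root `α` of squared length `2`. -/
def sRefl (α : E) : Function.End E := fun x => x - ⟪x, α⟫_ℝ • α

/-- The group generated by the reflections in the elements of `S`; since every reflection is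
an involution, the submonoid generated by the reflections coincides with the generated group. -/
def genBy (S : Set E) : Submonoid (Function.End E) :=
  Submonoid.closure (sRefl '' S)

/-- The Weyl group of `Φ`: the group generated by the reflections in all the roots. -/
abbrev WeylGroup (Φ : Set E) : Submonoid (Function.End E) := genBy Φ

/-- A base (set of simple roots) of `Φ`, together with the (unique) integer coefficients
`coeff δ γ` of each root `δ` with respect to the simple roots. -/
structure Base (Φ : Set E) where
  Δ : Finset E
  coeff : E → E → ℤ
  subset : ↑Δ ⊆ Φ
  indep : LinearIndependent ℝ (fun γ : {x : E // x ∈ Δ} => (γ : E))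
  expand : ∀ δ ∈ Φ, δ = ∑ γ ∈ Δ, (coeff δ γ : ℝ) • γ
  sign : ∀ δ ∈ Φ, (∀ γ ∈ Δ, 0 ≤ coeff δ γ) ∨ (∀ γ ∈ Δ, coeff δ γ ≤ 0)

variable {Φ : Set E}

/-- `θ` is the highest root of `Φ` with respect to the base `B`. -/
def IsHighest (B : Base Φ) (θ : E) : Prop :=
  θ ∈ Φ ∧ ∀ δ ∈ Φ, ∀ γ ∈ B.Δ, B.coeff δ γ ≤ B.coeff θ γ

/-- `α` is a Heisenberg simple root: the highest root `θ` has `α`-coefficient `2`, and every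
root other than `±θ` has `α`-coefficient in `{-1, 0, 1}`. -/
def IsHeisenberg (B : Base Φ) (θ α : E) : Prop :=
  B.coeff θ α = 2 ∧
    ∀ δ ∈ Φ, δ ≠ θ → δ ≠ -θ →
      B.coeff δ α = -1 ∨ B.coeff δ α = 0 ∨ B.coeff δ α = 1

/-- `α` is an extreme simple root with (unique) neighbour `β`. -/
def IsExtreme (B : Base Φ) (α β : E) : Prop :=
  β ∈ B.Δ ∧ β ≠ α ∧ ⟪α, β⟫_ℝ ≠ 0 ∧
    ∀ γ ∈ B.Δ, γ ≠ α → ⟪α, γ⟫_ℝ ≠ 0 → γ = β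

/-- `Φ_α`: the roots with `α`-coefficient `1` that are orthogonal to `α`. -/
def PhiSet (B : Base Φ) (α : E) : Set E :=
  {ε ∈ Φ | B.coeff ε α = 1 ∧ ⟪ε, α⟫_ℝ = 0}

/-- `Ψ_α`: the roots `ε` with `α`-coefficient `1` and `⟪ε, α⟫ ≤ 0`. -/
def PsiSet (B : Base Φ) (α : E) : Set E :=
  {ε ∈ Φ | B.coeff ε α = 1 ∧ ⟪ε, α⟫_ℝ ≤ 0}

lemma _root_.mul_self_conj_eq_one {M : Type*} [Monoid M] {a w : M} (ha : a * a = 1)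
    (hw : w * w = 1) : (a * w * a) * (a * w * a) = 1 := by
  calc (a * w * a) * (a * w * a) = a * (w * (a * a) * w) * a := by simp only [mul_assoc]
    _ = 1 := by rw [ha, mul_one, hw, mul_one, ha]

lemma _root_.Commute.mul_self_eq_one {M : Type*} [Monoid M] {a b : M} (hab : Commute a b)
    (ha : a * a = 1) (hb : b * b = 1) : (a * b) * (a * b) = 1 := by
  rw [hab.symm.mul_mul_mul_comm, ha, hb, one_mul]

section Reflection

lemma sRefl_apply (a x : E) : sRefl a x = x - ⟪x, a⟫_ℝ • a := rfl

lemma sRefl_apply_of_inner_eq_zero {a x : E} (h : ⟪x, a⟫_ℝ = 0) : sRefl a x = x := by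
  rw [sRefl_apply, h, zero_smul, sub_zero]

variable {a b : E}

lemma sRefl_mul_self (ha : ⟪a, a⟫_ℝ = 2) : sRefl a * sRefl a = 1 := by
  funext x
  change sRefl a (sRefl a x) = x
  simp only [sRefl_apply, inner_sub_left, real_inner_smul_left, ha]
  module

lemma sRefl_commute (h : ⟪a, b⟫_ℝ = 0) : Commute (sRefl a) (sRefl b) := by
  have h' : ⟪b, a⟫_ℝ = 0 := by rw [real_inner_comm, h]
  funext x
  change sRefl a (sRefl b x) = sRefl b (sRefl a x)
  simp only [sRefl_apply, inner_sub_left, real_inner_smul_left, h, h']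
  module

lemma sRefl_sRefl (ha : ⟪a, a⟫_ℝ = 2) : sRefl (sRefl a b) = sRefl a * sRefl b * sRefl a := by
  funext x
  change sRefl (sRefl a b) x = sRefl a (sRefl b (sRefl a x))
  simp only [sRefl_apply, inner_sub_left, inner_sub_right, real_inner_smul_left,
    real_inner_smul_right, ha, real_inner_comm b a]
  module

lemma sRefl_sub_apply_of_inner_eq_one (ha : ⟪a, a⟫_ℝ = 2) (h : ⟪b, a⟫_ℝ = 1) :
    sRefl a (b - a) = b := by
  rw [sRefl_apply, inner_sub_left, h, ha]
  module

lemma sRefl_sub_apply_right_of_inner_eq_one (ha : ⟪a, a⟫_ℝ = 2) (h : ⟪b, a⟫_ℝ = 1) :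
    sRefl (b - a) a = b := by
  rw [sRefl_apply, inner_sub_right, real_inner_comm, h, ha]
  module

lemma eq_of_inner_eq_two (ha : ⟪a, a⟫_ℝ = 2) (hb : ⟪b, b⟫_ℝ = 2) (h : ⟪a, b⟫_ℝ = 2) :
    a = b := by
  have h0 : ⟪a - b, a - b⟫_ℝ = 0 := by
    rw [inner_sub_left, inner_sub_right, inner_sub_right, real_inner_comm a b, ha, hb, h]
    norm_num
  exact sub_eq_zero.mp (inner_self_eq_zero.mp h0)

lemma sRefl_mem_genBy {S : Set E} (ha : a ∈ S) : sRefl a ∈ genBy S :=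
  Submonoid.subset_closure (Set.mem_image_of_mem _ ha)

end Reflection

namespace IsRootSystem

variable (hΦ : IsRootSystem Φ) {δ ε : E}
include hΦ

lemma neg_mem (hδ : δ ∈ Φ) : -δ ∈ Φ := by
  have h := hΦ.reflect_mem δ hδ δ hδ
  rwa [hΦ.norm_two δ hδ, two_smul, sub_add_cancel_left] at h

lemma sub_mem_of_inner_eq_one (hδ : δ ∈ Φ) (hε : ε ∈ Φ) (h : ⟪δ, ε⟫_ℝ = 1) : δ - ε ∈ Φ := by
  simpa [h] using hΦ.reflect_mem ε hε δ hδ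

lemma add_mem_of_inner_eq_neg_one (hδ : δ ∈ Φ) (hε : ε ∈ Φ) (h : ⟪δ, ε⟫_ℝ = -1) :
    δ + ε ∈ Φ := by
  simpa [h] using hΦ.reflect_mem ε hε δ hδ

lemma inner_eq_one_of_pos (hδ : δ ∈ Φ) (hε : ε ∈ Φ) (hne : δ ≠ ε) (h : 0 < ⟪δ, ε⟫_ℝ) :
    ⟪δ, ε⟫_ℝ = 1 := by
  obtain ⟨n, hn⟩ := hΦ.cartan_int δ hδ ε hε
  have hcs := real_inner_mul_inner_self_le δ ε
  rw [hΦ.norm_two δ hδ, hΦ.norm_two ε hε, hn] at hcs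
  have hn2 : n ≠ 2 := by
    rintro rfl
    exact hne (eq_of_inner_eq_two (hΦ.norm_two δ hδ) (hΦ.norm_two ε hε) (by rw [hn]; norm_num))
  rw [hn] at h ⊢
  have hn0 : 0 < n := by exact_mod_cast h
  have hn4 : n * n ≤ 4 := by exact_mod_cast hcs
  have : n ≤ 2 := by nlinarith
  obtain rfl : n = 1 := by omega
  norm_num

lemma inner_eq_neg_one_of_neg (hδ : δ ∈ Φ) (hε : ε ∈ Φ) (hne : δ ≠ -ε) (h : ⟪δ, ε⟫_ℝ < 0) :
    ⟪δ, ε⟫_ℝ = -1 := by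
  have := hΦ.inner_eq_one_of_pos hδ (hΦ.neg_mem hε) hne (by rw [inner_neg_right]; linarith)
  rw [inner_neg_right] at this
  linarith

end IsRootSystem

namespace Base

variable (B : Base Φ)

def height (δ : E) : ℤ := ∑ γ ∈ B.Δ, B.coeff δ γ

def IsPositive (δ : E) : Prop := ∀ γ ∈ B.Δ, 0 ≤ B.coeff δ γ

variable {B} {δ ε γ γ' : E}

lemma coeff_eq_of_eq_sum (hδ : δ ∈ Φ) {f : E → ℝ} (h : δ = ∑ γ ∈ B.Δ, f γ • γ)
    (hγ : γ ∈ B.Δ) : (B.coeff δ γ : ℝ) = f γ := by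
  have h0 : ∑ i : B.Δ, ((B.coeff δ i : ℝ) - f i) • (i : E) = 0 := by
    simp only [sub_smul, Finset.sum_sub_distrib,
      Finset.sum_coe_sort B.Δ (fun x => (B.coeff δ x : ℝ) • x),
      Finset.sum_coe_sort B.Δ (fun x => f x • x), ← B.expand δ hδ, ← h, sub_self]
  exact sub_eq_zero.mp (Fintype.linearIndependent_iff.mp B.indep _ h0 ⟨γ, hγ⟩)

lemma coeff_add (hδ : δ ∈ Φ) (hε : ε ∈ Φ) (h : δ + ε ∈ Φ) (hγ : γ ∈ B.Δ) :
    B.coeff (δ + ε) γ = B.coeff δ γ + B.coeff ε γ := by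
  have := coeff_eq_of_eq_sum (f := fun γ => (B.coeff δ γ + B.coeff ε γ : ℝ)) h
    (by simp_rw [add_smul, Finset.sum_add_distrib, ← B.expand δ hδ, ← B.expand ε hε]) hγ
  exact_mod_cast this

lemma coeff_sub (hδ : δ ∈ Φ) (hε : ε ∈ Φ) (h : δ - ε ∈ Φ) (hγ : γ ∈ B.Δ) :
    B.coeff (δ - ε) γ = B.coeff δ γ - B.coeff ε γ := by
  have := coeff_eq_of_eq_sum (f := fun γ => (B.coeff δ γ - B.coeff ε γ : ℝ)) h
    (by simp_rw [sub_smul, Finset.sum_sub_distrib, ← B.expand δ hδ, ← B.expand ε hε]) hγ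
  exact_mod_cast this

lemma coeff_neg (hδ : δ ∈ Φ) (h : -δ ∈ Φ) (hγ : γ ∈ B.Δ) : B.coeff (-δ) γ = -B.coeff δ γ := by
  have := coeff_eq_of_eq_sum (f := fun γ => (-B.coeff δ γ : ℝ)) h
    (by simp_rw [neg_smul, Finset.sum_neg_distrib, ← B.expand δ hδ]) hγ
  exact_mod_cast this

open Classical in
lemma coeff_simple (hγ : γ ∈ B.Δ) (hγ' : γ' ∈ B.Δ) :
    B.coeff γ γ' = if γ' = γ then 1 else 0 := by
  have := coeff_eq_of_eq_sum (f := fun γ' => if γ' = γ then (1 : ℝ) else 0) (B.subset hγ)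
    (by simp [ite_smul, hγ]) hγ'
  split_ifs at this ⊢ <;> exact_mod_cast this

lemma coeff_self (hγ : γ ∈ B.Δ) : B.coeff γ γ = 1 := by
  classical
  simpa using coeff_simple hγ hγ

lemma coeff_of_ne (hγ : γ ∈ B.Δ) (hγ' : γ' ∈ B.Δ) (hne : γ' ≠ γ) : B.coeff γ γ' = 0 := by
  classical
  simpa [hne] using coeff_simple hγ hγ'

lemma height_sub (hδ : δ ∈ Φ) (hε : ε ∈ Φ) (h : δ - ε ∈ Φ) :
    B.height (δ - ε) = B.height δ - B.height ε := by
  rw [height, Finset.sum_congr rfl fun γ hγ => coeff_sub hδ hε h hγ, Finset.sum_sub_distrib]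
  rfl

lemma height_simple (hγ : γ ∈ B.Δ) : B.height γ = 1 := by
  rw [height, Finset.sum_eq_single γ (fun γ' hγ' hne => coeff_of_ne hγ hγ' hne) (absurd hγ),
    coeff_self hγ]

lemma isPositive_of_coeff_pos (hδ : δ ∈ Φ) (hγ : γ ∈ B.Δ) (h : 0 < B.coeff δ γ) :
    B.IsPositive δ :=
  (B.sign δ hδ).resolve_right fun hneg => (hneg γ hγ).not_gt h

lemma IsPositive.sub_simple (hpos : B.IsPositive δ) (hδ : δ ∈ Φ) (hγ : γ ∈ B.Δ)
    (hc : 0 < B.coeff δ γ) (h : δ - γ ∈ Φ) : B.IsPositive (δ - γ) := by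
  intro γ' hγ'
  rw [coeff_sub hδ (B.subset hγ) h hγ']
  by_cases he : γ' = γ
  · rw [he, coeff_self hγ]; omega
  · rw [coeff_of_ne hγ hγ' he, sub_zero]; exact hpos γ' hγ'

lemma IsPositive.height_pos (hpos : B.IsPositive δ) (hΦ : IsRootSystem Φ) (hδ : δ ∈ Φ) :
    0 < B.height δ := by
  by_contra! hle
  have hzero : ∀ γ ∈ B.Δ, B.coeff δ γ = 0 := fun γ hγ =>
    le_antisymm ((Finset.single_le_sum hpos hγ).trans hle) (hpos γ hγ)
  apply hΦ.nonzero
  convert hδ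
  rw [B.expand δ hδ]
  exact (Finset.sum_eq_zero fun γ hγ => by simp [hzero γ hγ]).symm

section

variable (hΦ : IsRootSystem Φ) {α γ₁ γ₂ : E}
include hΦ

lemma inner_simple_eq_zero_or_neg_one (h₁ : γ₁ ∈ B.Δ) (h₂ : γ₂ ∈ B.Δ) (hne : γ₁ ≠ γ₂) :
    ⟪γ₁, γ₂⟫_ℝ = 0 ∨ ⟪γ₁, γ₂⟫_ℝ = -1 := by
  have hΦ₁ := B.subset h₁
  have hΦ₂ := B.subset h₂
  rcases lt_trichotomy ⟪γ₁, γ₂⟫_ℝ 0 with hneg | hzero | hpos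
  · refine Or.inr (hΦ.inner_eq_neg_one_of_neg hΦ₁ hΦ₂ ?_ hneg)
    rintro rfl
    have := coeff_neg hΦ₂ hΦ₁ h₁
    rw [coeff_self h₁, coeff_of_ne h₂ h₁ hne] at this
    omega
  · exact Or.inl hzero
  · exfalso
    have hsub := hΦ.sub_mem_of_inner_eq_one hΦ₁ hΦ₂ (hΦ.inner_eq_one_of_pos hΦ₁ hΦ₂ hne hpos)
    have hc₁ := coeff_sub hΦ₁ hΦ₂ hsub h₁
    have hc₂ := coeff_sub hΦ₁ hΦ₂ hsub h₂
    rw [coeff_self h₁, coeff_of_ne h₂ h₁ hne] at hc₁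
    rw [coeff_self h₂, coeff_of_ne h₁ h₂ hne.symm] at hc₂
    rcases B.sign _ hsub with h | h
    · have := h γ₂ h₂; omega
    · have := h γ₁ h₁; omega

lemma exists_simple_inner_eq_one (hδ : δ ∈ Φ) (hpos : B.IsPositive δ) (hs : δ ∉ B.Δ) :
    ∃ γ ∈ B.Δ, 0 < B.coeff δ γ ∧ ⟪δ, γ⟫_ℝ = 1 := by
  have h2 : ∑ γ ∈ B.Δ, (0 : ℝ) < ∑ γ ∈ B.Δ, (B.coeff δ γ : ℝ) * ⟪δ, γ⟫_ℝ := by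
    have := hΦ.norm_two δ hδ
    nth_rewrite 2 [B.expand δ hδ] at this
    simp only [inner_sum, real_inner_smul_right] at this
    simp [this]
  obtain ⟨γ, hγ, hprod⟩ := Finset.exists_lt_of_sum_lt h2
  have hc : (0 : ℝ) < B.coeff δ γ :=
    lt_of_le_of_ne (by exact_mod_cast hpos γ hγ) fun h => by simp [← h] at hprod
  refine ⟨γ, hγ, by exact_mod_cast hc, hΦ.inner_eq_one_of_pos hδ (B.subset hγ) ?_ ?_⟩
  · rintro rfl; exact hs hγ
  · exact pos_of_mul_pos_right hprod hc.le

theorem isPositive_induction {P : E → Prop} (simple : ∀ γ ∈ B.Δ, P γ)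
    (step : ∀ δ ∈ Φ, ∀ γ ∈ B.Δ, 0 < B.coeff δ γ → ⟪δ, γ⟫_ℝ = 1 → δ - γ ∈ Φ →
      P (δ - γ) → P δ)
    (hδ : δ ∈ Φ) (hpos : B.IsPositive δ) : P δ := by
  obtain ⟨n, hn⟩ : ∃ n : ℕ, B.height δ ≤ n := ⟨(B.height δ).toNat, Int.self_le_toNat _⟩
  induction n generalizing δ with
  | zero => exact absurd (hpos.height_pos hΦ hδ) (by omega)
  | succ n ih =>
    by_cases hs : δ ∈ B.Δ
    · exact simple δ hs
    obtain ⟨γ, hγ, hc, h1⟩ := exists_simple_inner_eq_one hΦ hδ hpos hs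
    have hsub := hΦ.sub_mem_of_inner_eq_one hδ (B.subset hγ) h1
    refine step δ hδ γ hγ hc h1 hsub (ih hsub (hpos.sub_simple hδ hγ hc hsub) ?_)
    rw [height_sub hδ (B.subset hγ) hsub, height_simple hγ]
    push_cast at hn
    omega

lemma sRefl_mem_genBy_of_support_subset {S : Set E} {β : E} (hβ : β ∈ Φ)
    (hpos : B.IsPositive β) (hS : ∀ γ ∈ B.Δ, B.coeff β γ ≠ 0 → γ ∈ S) :
    sRefl β ∈ genBy S := by
  refine isPositive_induction hΦ
    (P := fun β => (∀ γ ∈ B.Δ, B.coeff β γ ≠ 0 → γ ∈ S) → sRefl β ∈ genBy S)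
    (fun γ hγ hS => sRefl_mem_genBy (hS γ hγ (by rw [coeff_self hγ]; exact one_ne_zero)))
    ?_ hβ hpos hS
  intro δ hδ γ hγ hc h1 hsub ih hS
  have hγS : γ ∈ S := hS γ hγ hc.ne'
  have hconj : sRefl δ = sRefl γ * sRefl (δ - γ) * sRefl γ := by
    rw [← sRefl_sRefl (hΦ.norm_two γ (B.subset hγ)),
      sRefl_sub_apply_of_inner_eq_one (hΦ.norm_two γ (B.subset hγ)) h1]
  rw [hconj]
  refine mul_mem (mul_mem (sRefl_mem_genBy hγS) (ih fun γ' hγ' hne => ?_)) (sRefl_mem_genBy hγS)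
  by_cases he : γ' = γ
  · exact he ▸ hγS
  · rw [coeff_sub hδ (B.subset hγ) hsub hγ', coeff_of_ne hγ hγ' he, sub_zero] at hne
    exact hS γ' hγ' hne

lemma sRefl_sub_mem_genBy_diff (hα : α ∈ B.Δ) (hδ : δ ∈ Φ) (hδα : B.coeff δ α = 1)
    (h : ⟪δ, α⟫_ℝ = 1) : sRefl (δ - α) ∈ genBy ((↑B.Δ : Set E) \ {α}) := by
  have hsub := hΦ.sub_mem_of_inner_eq_one hδ (B.subset hα) h
  have hpos := (isPositive_of_coeff_pos hδ hα (by omega)).sub_simple hδ hα (by omega) hsub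
  refine sRefl_mem_genBy_of_support_subset hΦ hsub hpos fun γ hγ hne => ⟨hγ, ?_⟩
  rintro rfl
  rw [coeff_sub hδ (B.subset hα) hsub hγ, coeff_self hγ, hδα, sub_self] at hne
  exact hne rfl

/-- A negative inner product would make `δ + ε` a root with `α`-coefficient `2`. -/
lemma inner_eq_zero_or_one_of_coeff_eq_one (hα : α ∈ B.Δ) (hmax : ∀ δ ∈ Φ, B.coeff δ α ≤ 1)
    (hδ : δ ∈ Φ) (hε : ε ∈ Φ) (hδα : B.coeff δ α = 1) (hεα : B.coeff ε α = 1) (hne : δ ≠ ε) :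
    ⟪δ, ε⟫_ℝ = 0 ∨ ⟪δ, ε⟫_ℝ = 1 := by
  rcases lt_trichotomy ⟪δ, ε⟫_ℝ 0 with hneg | hzero | hpos
  · exfalso
    have hne' : δ ≠ -ε := by
      rintro rfl
      have := coeff_neg hε hδ hα
      omega
    have hadd := hΦ.add_mem_of_inner_eq_neg_one hδ hε (hΦ.inner_eq_neg_one_of_neg hδ hε hne' hneg)
    have := hmax _ hadd
    rw [coeff_add hδ hε hadd hα] at this
    omega
  · exact Or.inl hzero
  · exact Or.inr (hΦ.inner_eq_one_of_pos hδ hε hne hpos)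

lemma exists_involution_apply_eq_of_inner_eq_zero (hα : α ∈ B.Δ) (hδ : δ ∈ Φ)
    (hδα : B.coeff δ α = 1) (hδα0 : ⟪δ, α⟫_ℝ = 0) (hγ : γ ∈ B.Δ) (hδγ : ⟪δ, γ⟫_ℝ = 1)
    (hsub : δ - γ ∈ Φ)
    (ih : B.coeff (δ - γ) α = 1 →
      ∃ w ∈ genBy ((↑B.Δ : Set E) \ {α}), w * w = 1 ∧ w α = δ - γ) :
    ∃ w ∈ genBy ((↑B.Δ : Set E) \ {α}), w * w = 1 ∧ w α = δ := by
  have hγα : γ ≠ α := by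
    rintro rfl
    linarith
  have hsubα : B.coeff (δ - γ) α = 1 := by
    rw [coeff_sub hδ (B.subset hγ) hsub hα, coeff_of_ne hγ hα hγα.symm, hδα, sub_zero]
  have hsγ : sRefl γ ∈ genBy ((↑B.Δ : Set E) \ {α}) := sRefl_mem_genBy ⟨hγ, hγα⟩
  have hγγ := hΦ.norm_two γ (B.subset hγ)
  obtain hγα0 | hγα1 := inner_simple_eq_zero_or_neg_one hΦ hγ hα hγα
  · -- `s_γ` fixes `α` and maps `δ - γ` to `δ`, so it conjugates an involution for `δ - γ`.
    obtain ⟨w, hw, hww, hwα⟩ := ih hsubα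
    refine ⟨sRefl γ * w * sRefl γ, mul_mem (mul_mem hsγ hw) hsγ,
      mul_self_conj_eq_one (sRefl_mul_self hγγ) hww, ?_⟩
    change sRefl γ (w (sRefl γ α)) = δ
    rw [sRefl_apply_of_inner_eq_zero (a := γ) (x := α) (by rwa [real_inner_comm]), hwα,
      sRefl_sub_apply_of_inner_eq_one hγγ hδγ]
  · -- `s_{δ-γ-α}` sends `α` to `δ - γ`, and `s_γ`, which commutes with it, sends that to `δ`.
    have hsubα1 : ⟪δ - γ, α⟫_ℝ = 1 := by
      rw [inner_sub_left, hδα0, hγα1]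
      norm_num
    have horth : ⟪γ, δ - γ - α⟫_ℝ = 0 := by
      rw [inner_sub_right, inner_sub_right, real_inner_comm, hδγ, hγγ, hγα1]
      norm_num
    have hαΦ := B.subset hα
    refine ⟨sRefl γ * sRefl (δ - γ - α),
      mul_mem hsγ (sRefl_sub_mem_genBy_diff hΦ hα hsub hsubα hsubα1),
      (sRefl_commute horth).mul_self_eq_one (sRefl_mul_self hγγ)
        (sRefl_mul_self (hΦ.norm_two _ (hΦ.sub_mem_of_inner_eq_one hsub hαΦ hsubα1))), ?_⟩
    change sRefl γ (sRefl (δ - γ - α) α) = δ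
    rw [sRefl_sub_apply_right_of_inner_eq_one (hΦ.norm_two α hαΦ) hsubα1,
      sRefl_sub_apply_of_inner_eq_one hγγ hδγ]

theorem exists_involution_mem_genBy_diff_apply_eq (hα : α ∈ B.Δ)
    (hmax : ∀ δ ∈ Φ, B.coeff δ α ≤ 1) (hδ : δ ∈ Φ) (hδα : B.coeff δ α = 1) :
    ∃ w ∈ genBy ((↑B.Δ : Set E) \ {α}), w * w = 1 ∧ w α = δ := by
  have hαΦ := B.subset hα
  refine isPositive_induction hΦ
    (P := fun δ => B.coeff δ α = 1 → ∃ w ∈ genBy ((↑B.Δ : Set E) \ {α}), w * w = 1 ∧ w α = δ)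
    ?_ ?_ hδ (isPositive_of_coeff_pos hδ hα (by omega)) hδα
  · intro γ hγ hγα
    obtain rfl : γ = α := by
      by_contra hne
      rw [coeff_of_ne hγ hα (Ne.symm hne)] at hγα
      omega
    exact ⟨1, one_mem _, mul_one 1, rfl⟩
  intro δ hδ γ hγ _ hδγ hsub ih hδα
  obtain rfl | hne := eq_or_ne δ α
  · exact ⟨1, one_mem _, mul_one 1, rfl⟩
  obtain hδα0 | hδα1 :=
    inner_eq_zero_or_one_of_coeff_eq_one hΦ hα hmax hδ hαΦ hδα (coeff_self hα) hne
  · exact exists_involution_apply_eq_of_inner_eq_zero hΦ hα hδ hδα hδα0 hγ hδγ hsub ih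
  · exact ⟨_, sRefl_sub_mem_genBy_diff hΦ hα hδ hδα hδα1,
      sRefl_mul_self (hΦ.norm_two _ (hΦ.sub_mem_of_inner_eq_one hδ hαΦ hδα1)),
      sRefl_sub_apply_right_of_inner_eq_one (hΦ.norm_two α hαΦ) hδα1⟩

end

end Base

theorem exists_involution_conj_alpha_to_highest_general
    (hΦ : IsRootSystem Φ) (B : Base Φ)
    {θ α : E} (hθ : IsHighest B θ) (hα : α ∈ B.Δ) (hab : B.coeff θ α = 1) :
    ∃ w ∈ genBy ((↑B.Δ : Set E) \ {α}), w * w = 1 ∧ w α = θ :=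
  Base.exists_involution_mem_genBy_diff_apply_eq hΦ hα (fun δ hδ => hab ▸ hθ.2 δ hδ α hα)
    hθ.1 hab

/-- For an abelian simple root `α` (i.e. `c_α(θ) = 1`), there is an involution `w` in the
subgroup of the Weyl group generated by the simple reflections in the simple roots other
than `α` with `w(α) = θ`. -/
theorem exists_involution_conj_alpha_to_highest
    (hΦ : IsRootSystem Φ) (hirr : IsIrreducible Φ) (B : Base Φ)
    {θ α : E} (hθ : IsHighest B θ) (hα : α ∈ B.Δ) (hab : B.coeff θ α = 1) :
    ∃ w ∈ genBy ((↑B.Δ : Set E) \ {α}), w * w = 1 ∧ w α = θ :=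
  exists_involution_conj_alpha_to_highest_general hΦ B hθ hα hab

end PaperRS
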